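/- arXiv:2407.10024 — 4 statements merged into one kernel-verified Lean document; each statement's English description precedes it below -/
import Mathlib

section
/- The number of permutations of [N] all of whose cycle lengths are even equals N! · 2^{-N} · binomial(N, N/2), when N is even. -/
/-!
A permutation has only even cycles iff it admits a colouring `χ : α → ZMod 2` with
`χ (σ x) = χ x + 1`; such colourings are much easier than minimal periods to carry along bijections.

Let `a(n)` count such permutations of an `n`-element set. For `|α| = n + 2` and a point `a`, an
even-cycle `σ` moves `a`; put `b = σ a` and `c = σ⁻¹ a`. Then `σ * swap a c * swap c b` fixes `a` and
`b` and acts on the remaining `n` points as `σ` with `a, b` cut out of their cycle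
`c ↦ a ↦ b ↦ σ b`, which keeps every cycle length even. This is a bijection for each of the
`(n + 1)²` pairs `(b, c)`, so `a(n + 2) = (n + 1)² a(n)` and `a(2m) = ((2m)! / (2m)‼)²`, which is
`(2m)! 2^{-2m} C(2m, m)` because `(2m)‼ = 2^m m!` and `C(2m, m) = (2m)! / m!²`.
-/

open Function
open scoped Nat

namespace Equiv.Perm

variable {α β : Type*} {σ : Perm α}

def HasAlternatingColoring (σ : Perm α) : Prop :=
  ∃ χ : α → ZMod 2, ∀ x, χ (σ x) = χ x + 1

theorem coloring_pow_apply {χ : α → ZMod 2} (hχ : ∀ x, χ (σ x) = χ x + 1) (n : ℕ) (x : α) :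
    χ ((σ ^ n) x) = χ x + n := by
  induction n with
  | zero => simp
  | succ n ih => rw [pow_succ', mul_apply, hχ, ih]; push_cast; ring

theorem HasAlternatingColoring.even_minimalPeriod (h : σ.HasAlternatingColoring) (x : α) :
    Even (minimalPeriod σ x) := by
  obtain ⟨χ, hχ⟩ := h
  have hper : (σ ^ minimalPeriod σ x) x = x := by
    rw [← iterate_eq_pow]
    exact isPeriodicPt_minimalPeriod σ x
  have hχper := coloring_pow_apply hχ (minimalPeriod σ x) x
  rw [hper, left_eq_add] at hχper
  exact ZMod.natCast_eq_zero_iff_even.mp hχper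

theorem intCast_zmod_two_eq_of_zpow_apply_eq {x : α} (hx : Even (minimalPeriod σ x)) {i j : ℤ}
    (h : (σ ^ i) x = (σ ^ j) x) : (j : ZMod 2) = i := by
  have hper : (σ ^ (-j + i)) x = x := by
    rw [zpow_add, mul_apply, h, zpow_neg, coe_inv, symm_apply_apply]
  have hdvd : (minimalPeriod σ x : ℤ) ∣ i - j := by
    rw [← neg_add_eq_sub]
    exact MulAction.zpow_smul_eq_iff_minimalPeriod_dvd (a := σ) (b := x) |>.mp hper
  exact (ZMod.intCast_eq_intCast_iff_dvd_sub j i 2).mpr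
    ((Int.natCast_dvd_natCast.mpr hx.two_dvd).trans hdvd)

theorem hasAlternatingColoring_of_even_minimalPeriod (h : ∀ x, Even (minimalPeriod σ x)) :
    σ.HasAlternatingColoring := by
  -- colour `x` by the parity of an exponent carrying a fixed representative of its cycle to `x`
  let r : α → α := fun x => Quotient.out (s := SameCycle.setoid σ) ⟦x⟧
  have hr : ∀ x, σ.SameCycle (r x) x := fun x => Quotient.mk_out (s := SameCycle.setoid σ) x
  have hrσ : ∀ x, r (σ x) = r x := fun x =>
    congrArg Quotient.out (Quotient.sound (s := SameCycle.setoid σ)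
      (sameCycle_apply_left.mpr (SameCycle.refl σ x)))
  choose k hk using hr
  refine ⟨fun x => (k x : ZMod 2), fun x => ?_⟩
  have hpow : (σ ^ (k x + 1)) (r x) = (σ ^ k (σ x)) (r x) := by
    rw [add_comm, zpow_one_add, mul_apply, hk, ← hrσ, hk]
  push_cast [intCast_zmod_two_eq_of_zpow_apply_eq (h _) hpow]
  rfl

theorem hasAlternatingColoring_iff :
    σ.HasAlternatingColoring ↔ ∀ x, Even (minimalPeriod σ x) :=
  ⟨HasAlternatingColoring.even_minimalPeriod, hasAlternatingColoring_of_even_minimalPeriod⟩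

theorem HasAlternatingColoring.apply_ne_self (h : σ.HasAlternatingColoring) (x : α) :
    σ x ≠ x := by
  obtain ⟨χ, hχ⟩ := h
  intro hx
  simpa [hx] using hχ x

theorem HasAlternatingColoring.permCongr (h : σ.HasAlternatingColoring) (e : α ≃ β) :
    (e.permCongr σ).HasAlternatingColoring := by
  obtain ⟨χ, hχ⟩ := h
  exact ⟨χ ∘ e.symm, fun y => by simp [permCongr_apply, hχ]⟩

theorem card_hasAlternatingColoring_congr (e : α ≃ β) :
    Nat.card {σ : Perm α // σ.HasAlternatingColoring}
      = Nat.card {σ : Perm β // σ.HasAlternatingColoring} :=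
  Nat.card_congr <| e.permCongr.subtypeEquiv fun σ =>
    ⟨(·.permCongr e), fun h => by
      simpa only [← permCongr_symm, symm_apply_apply] using h.permCongr e.symm⟩

def HasAlternatingColoringOn (σ : Perm α) (p : α → Prop) : Prop :=
  ∃ χ : α → ZMod 2, ∀ x, p x → χ (σ x) = χ x + 1

theorem hasAlternatingColoring_iff_ofSubtype {p : α → Prop} [DecidablePred p]
    (ρ : Perm (Subtype p)) :
    ρ.HasAlternatingColoring ↔ (ofSubtype ρ).HasAlternatingColoringOn p := by
  constructor
  · rintro ⟨χ, hχ⟩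
    refine ⟨fun x => if hx : p x then χ ⟨x, hx⟩ else 0, fun x hx => ?_⟩
    dsimp only
    rw [ofSubtype_apply_of_mem ρ hx, dif_pos (ρ _).2, dif_pos hx, ← hχ]
  · rintro ⟨χ, hχ⟩
    exact ⟨χ ∘ Subtype.val, fun y => by simpa using hχ y y.2⟩

section CutOut

variable [DecidableEq α] {a b c : α}

theorem mul_swap_mul_swap_apply (hab : a ≠ b) (hac : a ≠ c) {x : α} (hxa : x ≠ a)
    (hxb : x ≠ b) : (σ * swap a c * swap c b) x = σ (if x = c then b else x) := by
  by_cases hxc : x = c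
  · subst hxc
    rw [if_pos rfl, mul_apply, mul_apply, swap_apply_left,
      swap_apply_of_ne_of_ne hab.symm hxb.symm]
  · rw [if_neg hxc, mul_apply, mul_apply, swap_apply_of_ne_of_ne hxc hxb,
      swap_apply_of_ne_of_ne hxa hxc]

theorem hasAlternatingColoring_iff_mul_swap_mul_swap (hab : a ≠ b) (hac : a ≠ c)
    (hσa : σ a = b) (hσc : σ c = a) : σ.HasAlternatingColoring ↔
      (σ * swap a c * swap c b).HasAlternatingColoringOn fun x => x ≠ a ∧ x ≠ b := by
  constructor
  · rintro ⟨χ, hχ⟩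
    refine ⟨χ, fun x ⟨hxa, hxb⟩ => ?_⟩
    rw [mul_swap_mul_swap_apply hab hac hxa hxb]
    split_ifs with hxc
    · rw [hxc, hχ, ← hσa, hχ, ← hσc, hχ, CharTwo.add_cancel_right]
    · exact hχ x
  · rintro ⟨χ, hχ⟩
    -- recolour `a` and `b` so that `c ↦ a ↦ b` alternates
    set χ' := update (update χ a (χ c + 1)) b (χ c)
    have hχ'a : χ' a = χ c + 1 := by simp [χ', hab]
    have hχ'b : χ' b = χ c := update_self ..
    have hχ'c : χ' c = χ c := by by_cases hcb : c = b <;> simp [χ', hcb, hac.symm]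
    have hχ'_of_ne : ∀ y, y ≠ a → y ≠ b → χ' y = χ y := fun y hya hyb => by
      simp [χ', hya, hyb]
    refine ⟨χ', fun x => ?_⟩
    by_cases hxa : x = a
    · rw [hxa, hσa, hχ'a, CharTwo.add_cancel_right, hχ'b]
    by_cases hxc : x = c
    · rw [hxc, hσc, hχ'a, hχ'c]
    have hσxa : σ x ≠ a := fun h => hxc (σ.injective (h.trans hσc.symm))
    have hσxb : σ x ≠ b := fun h => hxa (σ.injective (h.trans hσa.symm))
    rw [hχ'_of_ne _ hσxa hσxb]
    by_cases hxb : x = b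
    · have hcb : c ≠ b := fun h => hxc (hxb.trans h.symm)
      have hχc := hχ c ⟨Ne.symm hac, hcb⟩
      rw [mul_swap_mul_swap_apply hab hac (Ne.symm hac) hcb, if_pos rfl, ← hxb] at hχc
      rw [hχc, hxb, hχ'b]
    · have hχx := hχ x ⟨hxa, hxb⟩
      rw [mul_swap_mul_swap_apply hab hac hxa hxb, if_neg hxc] at hχx
      rw [hχx, hχ'_of_ne x hxa hxb]

theorem card_hasAlternatingColoring_apply_eq_apply_eq (hab : a ≠ b) (hac : a ≠ c) :
    Nat.card {σ : Perm α // σ.HasAlternatingColoring ∧ σ a = b ∧ σ c = a}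
      = Nat.card {ρ : Perm {x // x ≠ a ∧ x ≠ b} // ρ.HasAlternatingColoring} := by
  let p : α → Prop := fun x => x ≠ a ∧ x ≠ b
  have hfix : ∀ τ : Perm α, (∀ x, ¬p x → τ x = x) ↔ τ a = a ∧ τ b = b := fun τ => by
    refine ⟨fun h => ⟨h a (by simp [p]), h b (by simp [p])⟩, fun ⟨ha, hb⟩ x hx => ?_⟩
    obtain rfl | rfl : x = a ∨ x = b := by tauto
    exacts [ha, hb]
  calc Nat.card {σ : Perm α // σ.HasAlternatingColoring ∧ σ a = b ∧ σ c = a}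
      = Nat.card {τ : Perm α // τ.HasAlternatingColoringOn p ∧ τ a = a ∧ τ b = b} := by
        refine Nat.card_congr <|
          (Equiv.mulRight (swap a c * swap c b)).subtypeEquiv fun σ => ?_
        have hτa : (σ * (swap a c * swap c b)) a = σ c := by
          simp [swap_apply_of_ne_of_ne hac hab, swap_apply_left]
        have hτb : (σ * (swap a c * swap c b)) b = σ a := by simp
        rw [Equiv.coe_mulRight, hτa, hτb]
        dsimp only
        rw [← mul_assoc]
        exact ⟨fun ⟨h, ha, hc⟩ =>
            ⟨(hasAlternatingColoring_iff_mul_swap_mul_swap hab hac ha hc).mp h, hc, ha⟩,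
          fun ⟨h, hc, ha⟩ =>
            ⟨(hasAlternatingColoring_iff_mul_swap_mul_swap hab hac ha hc).mpr h, ha, hc⟩⟩
    _ = Nat.card {τ : Perm α // (∀ x, ¬p x → τ x = x) ∧ τ.HasAlternatingColoringOn p} :=
        Nat.card_congr <| subtypeEquivRight fun τ => by rw [hfix, and_comm]
    _ = Nat.card {τ : {τ : Perm α // ∀ x, ¬p x → τ x = x} // τ.1.HasAlternatingColoringOn p} :=
        Nat.card_congr (subtypeSubtypeEquivSubtypeInter _ _).symm
    _ = Nat.card {ρ : Perm {x // x ≠ a ∧ x ≠ b} // ρ.HasAlternatingColoring} :=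
        Nat.card_congr ((Perm.subtypeEquivSubtypePerm p).subtypeEquiv
          hasAlternatingColoring_iff_ofSubtype).symm

end CutOut

theorem card_hasAlternatingColoring_of_card_eq_add_two [Fintype α] [DecidableEq α] {n : ℕ}
    (hα : Fintype.card α = n + 2) :
    Nat.card {σ : Perm α // σ.HasAlternatingColoring}
      = (n + 1) ^ 2 * Nat.card {σ : Perm (Fin n) // σ.HasAlternatingColoring} := by
  obtain ⟨a⟩ : Nonempty α := Fintype.card_pos_iff.mp (by omega)
  let A := {x // x ≠ a}
  let endpoints (σ : {σ : Perm α // σ.HasAlternatingColoring}) : A × A :=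
    (⟨σ.1 a, σ.2.apply_ne_self a⟩,
      ⟨σ.1⁻¹ a, fun h => σ.2.apply_ne_self a (inv_eq_iff_eq.mp h).symm⟩)
  have hendpoints : ∀ σ bc, endpoints σ = bc ↔ σ.1 a = bc.1 ∧ σ.1 bc.2 = a := by
    rintro σ ⟨b, c⟩
    rw [Prod.mk.injEq, Subtype.ext_iff, Subtype.ext_iff, inv_eq_iff_eq, eq_comm (a := a)]
  have hfibre : ∀ bc : A × A,
      Nat.card {σ : Perm α // σ.HasAlternatingColoring ∧ σ a = bc.1 ∧ σ bc.2 = a}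
        = Nat.card {σ : Perm (Fin n) // σ.HasAlternatingColoring} := by
    rintro ⟨⟨b, hb⟩, ⟨c, hc⟩⟩
    rw [card_hasAlternatingColoring_apply_eq_apply_eq (Ne.symm hb) (Ne.symm hc)]
    refine card_hasAlternatingColoring_congr (Finite.equivFinOfCardEq ?_)
    simp [Nat.card_eq_fintype_card, Fintype.card_subtype, Finset.filter_and,
      Finset.filter_ne', Ne.symm hb, hα]
  have hA : Nat.card A = n + 1 := by
    simp [A, Nat.card_eq_fintype_card, Fintype.card_subtype_compl, hα]
  calc Nat.card {σ : Perm α // σ.HasAlternatingColoring}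
      = ∑ bc : A × A,
          Nat.card {σ : Perm α // σ.HasAlternatingColoring ∧ σ a = bc.1 ∧ σ bc.2 = a} := by
        rw [← Nat.card_sigma]
        exact Nat.card_congr <| (sigmaFiberEquiv endpoints).symm.trans <|
          Equiv.sigmaCongrRight fun bc => (subtypeEquivRight fun σ => hendpoints σ bc).trans <|
            subtypeSubtypeEquivSubtypeInter HasAlternatingColoring
              fun σ => σ a = bc.1 ∧ σ bc.2 = a
    _ = (n + 1) ^ 2 * Nat.card {σ : Perm (Fin n) // σ.HasAlternatingColoring} := by
        rw [Finset.sum_congr rfl fun bc _ => hfibre bc, Finset.sum_const, Finset.card_univ,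
          ← Nat.card_eq_fintype_card, Nat.card_prod, hA, smul_eq_mul, sq]

theorem card_hasAlternatingColoring_fin_two_mul_mul_doubleFactorial_sq (m : ℕ) :
    Nat.card {σ : Perm (Fin (2 * m)) // σ.HasAlternatingColoring} * (2 * m)‼ ^ 2
      = (2 * m)! ^ 2 := by
  induction m with
  | zero =>
    have hcard : Nat.card {σ : Perm (Fin 0) // σ.HasAlternatingColoring} = 1 :=
      Nat.card_eq_one_iff_unique.mpr ⟨inferInstance, ⟨⟨1, isEmptyElim, isEmptyElim⟩⟩⟩
    simpa using hcard
  | succ m ih =>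
    rw [mul_add_one, card_hasAlternatingColoring_of_card_eq_add_two (Fintype.card_fin _),
      Nat.doubleFactorial_add_two, Nat.factorial_succ, Nat.factorial_succ]
    calc (2 * m + 1) ^ 2 * Nat.card {σ : Perm (Fin (2 * m)) // σ.HasAlternatingColoring}
          * ((2 * m + 2) * (2 * m)‼) ^ 2
        = ((2 * m + 2) * (2 * m + 1)) ^ 2
          * (Nat.card {σ : Perm (Fin (2 * m)) // σ.HasAlternatingColoring} * (2 * m)‼ ^ 2) := by
          ring
      _ = ((2 * m + 1 + 1) * ((2 * m + 1) * (2 * m)!)) ^ 2 := by rw [ih]; ring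

theorem card_hasAlternatingColoring_fin_two_mul (m : ℕ) :
    (Nat.card {σ : Perm (Fin (2 * m)) // σ.HasAlternatingColoring} : ℚ)
      = (2 * m)! * (2 ^ (2 * m))⁻¹ * (2 * m).choose m := by
  have hcount := card_hasAlternatingColoring_fin_two_mul_mul_doubleFactorial_sq m
  rw [Nat.doubleFactorial_two_mul] at hcount
  have hchoose : (2 * m).choose m * m ! * m ! = (2 * m)! := by
    simpa [show 2 * m - m = m by omega] using
      Nat.choose_mul_factorial_mul_factorial (by omega : m ≤ 2 * m)
  have hcount' : Nat.card {σ : Perm (Fin (2 * m)) // σ.HasAlternatingColoring}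
      * 2 ^ (2 * m) * m ! ^ 2 = (2 * m)! * (2 * m).choose m * m ! ^ 2 :=
    calc _ = Nat.card {σ : Perm (Fin (2 * m)) // σ.HasAlternatingColoring}
          * (2 ^ m * m !) ^ 2 := by ring
      _ = (2 * m)! * ((2 * m).choose m * m ! * m !) := by rw [hcount, hchoose, sq]
      _ = _ := by ring
  field_simp
  exact_mod_cast mul_right_cancel₀ (by positivity) hcount'

end Equiv.Perm

theorem numEvenCyclePerms_general (N : ℕ) (hNe : Even N) :
    (Nat.card {σ : Equiv.Perm (Fin N) //
        ∀ x : Fin N, Even (Function.minimalPeriod σ x)} : ℚ)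
      = (N ! : ℚ) * ((2 : ℚ) ^ N)⁻¹ * (N.choose (N / 2)) := by
  obtain ⟨m, rfl⟩ := hNe
  rw [← two_mul, Nat.mul_div_cancel_left m two_pos,
    ← Equiv.Perm.card_hasAlternatingColoring_fin_two_mul m]
  exact congrArg _ <| Nat.card_congr <|
    Equiv.subtypeEquivRight fun σ => Equiv.Perm.hasAlternatingColoring_iff.symm

/-- For even positive `N`, the number of permutations of `[N]` all of whose cycle
lengths are even equals `N! · 2^{-N} · C(N, N/2)`. -/
theorem numEvenCyclePerms (N : ℕ) (hN : 0 < N) (hNe : Even N) :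
    (Nat.card {σ : Equiv.Perm (Fin N) //
        ∀ x : Fin N, Even (Function.minimalPeriod σ x)} : ℚ)
      = (N ! : ℚ) * ((2 : ℚ) ^ N)⁻¹ * (N.choose (N / 2)) :=
  numEvenCyclePerms_general N hNe
end

section
/- For odd N, the number of permutations of [N] all of whose cycle lengths are odd equals N! · 2^{-N+1} · binomial(N-1, (N-1)/2). -/
/-!
Write `σ = swap none (some j) * τ.optionCongr` for a permutation `σ` of `Option α` with
`σ none = some j` (Mathlib's `decomposeOption`): `σ` is `τ` with the new point `none` inserted
just before `j`, so the cycle of `τ` through `j` grows by one and the other cycles are unchanged.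
Hence `σ` has only odd cycles iff either `σ` fixes `none` and `τ` has only odd cycles, or the cycle
of `τ` through `j` is its only even one; and permutations of `Option β` whose only even cycle
passes through `none` come, by the same insertion, from permutations of `β` with only odd cycles.
For the number `a n` of permutations of `n` points with only odd cycles this gives
`a (n + 2) = a (n + 1) + (n + 1) * n * a n`, hence `a (2k + 1) = (2k + 1) * a (2k)` and
`a (2k) * 4 ^ k = (2k)! * C(2k, k)`.
-/

open Nat Function Equiv

theorem Function.Semiconj.minimalPeriod_eq {α β : Type*} {h : α → β} {f : α → α} {g : β → β}
    (hs : Semiconj h f g) (hinj : Injective h) (x : α) :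
    minimalPeriod g (h x) = minimalPeriod f x :=
  minimalPeriod_eq_minimalPeriod_iff.2 fun n => by
    simp only [IsPeriodicPt, IsFixedPt, ← hs.iterate_right n x, hinj.eq_iff]

namespace Equiv.Perm

variable {α β : Type*}

theorem minimalPeriod_eq_ncard_sameCycle [Finite α] (f : Perm α) (x : α) :
    minimalPeriod f x = {y | f.SameCycle x y}.ncard := by
  classical
  have := Fintype.ofFinite α
  have h := MulAction.minimalPeriod_eq_card (a := f) (b := x)
  rw [← Nat.card_eq_fintype_card] at h
  refine h.trans ?_
  rw [← Nat.card_coe_set_eq]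
  congr 2
  ext y
  simp only [MulAction.mem_orbit_iff, Subtype.exists, Subgroup.mk_smul, Perm.smul_def, exists_prop,
    Subgroup.exists_mem_zpowers, SameCycle, Set.mem_ofPred_eq]

theorem SameCycle.minimalPeriod_eq [Finite α] {f : Perm α} {x y : α} (h : f.SameCycle x y) :
    minimalPeriod f x = minimalPeriod f y := by
  simp only [minimalPeriod_eq_ncard_sameCycle]
  congr 1
  ext z
  exact ⟨h.symm.trans, h.trans⟩

theorem SameCycle.mem_of_mapsTo [Finite α] {f : Perm α} {s : Set α} (hs : Set.MapsTo f s s)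
    {x y : α} (hx : x ∈ s) (h : f.SameCycle x y) : y ∈ s := by
  obtain ⟨n, rfl⟩ := h.exists_nat_pow_eq
  rw [← iterate_eq_pow]
  exact hs.iterate n hx

theorem sameCycle_iff_of_eqOn_sameCycle [Finite α] {f g : Perm α} {x : α}
    (h : ∀ y, f.SameCycle x y → f y = g y) {y : α} : f.SameCycle x y ↔ g.SameCycle x y := by
  let s := {y | f.SameCycle x y ∧ g.SameCycle x y}
  have hs : ∀ y ∈ s, f y = g y := fun y hy => h y hy.1
  have hfs : Set.MapsTo f s s := fun y hy =>
    ⟨sameCycle_apply_right.2 hy.1, hs y hy ▸ sameCycle_apply_right.2 hy.2⟩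
  have hgs : Set.MapsTo g s s := fun y hy =>
    ⟨(hs y hy).symm ▸ sameCycle_apply_right.2 hy.1, sameCycle_apply_right.2 hy.2⟩
  have hx : x ∈ s := ⟨SameCycle.rfl, SameCycle.rfl⟩
  exact ⟨fun hy => (hy.mem_of_mapsTo hfs hx).2, fun hy => (hy.mem_of_mapsTo hgs hx).1⟩

theorem _root_.Function.Semiconj.sameCycle_iff {h : α → β} {f : Perm α} {g : Perm β}
    (hs : Semiconj h f g) (hinj : Injective h) {x y : α} :
    g.SameCycle (h x) (h y) ↔ f.SameCycle x y := by
  have hpow : ∀ (n : ℕ) x, (g ^ n) (h x) = h ((f ^ n) x) := fun n x => by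
    simp only [← iterate_eq_pow, hs.iterate_right n x]
  have hzpow : ∀ i : ℤ, (g ^ i) (h x) = h ((f ^ i) x) := fun i => by
    obtain ⟨n, rfl | rfl⟩ := Int.eq_nat_or_neg i
    · rw [zpow_natCast, zpow_natCast, hpow]
    · rw [zpow_neg, zpow_natCast, zpow_neg, zpow_natCast, inv_eq_iff_eq, hpow, ← mul_apply,
        mul_inv_cancel, one_apply]
  exact exists_congr fun i => by rw [hzpow, hinj.eq_iff]

section insertion

variable [DecidableEq α] {g : Perm α} {v x : α}

theorem sameCycle_swap_mul_iff [Finite α] (hv : g v = v) (hxv : x ≠ v) {y : α} :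
    (swap v x * g).SameCycle x y ↔ g.SameCycle x y ∨ y = v := by
  set σ := swap v x * g
  have hσv : σ v = x := by rw [mul_apply, hv, swap_apply_left]
  have hv_mem : σ.SameCycle x v := (sameCycle_apply_left.1 (hσv ▸ SameCycle.rfl)).symm
  constructor
  · refine fun h => h.mem_of_mapsTo (s := {y | g.SameCycle x y ∨ y = v}) ?_ (Or.inl .rfl)
    rintro z (hz | rfl)
    · have hgz : g.SameCycle x (g z) := sameCycle_apply_right.2 hz
      simp only [σ, Set.mem_ofPred_eq, mul_apply, swap_apply_def]
      split_ifs
      · exact Or.inl .rfl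
      · exact Or.inr rfl
      · exact Or.inl hgz
    · exact Or.inl (hσv ▸ .rfl)
  · rintro (h | rfl)
    · refine h.mem_of_mapsTo (s := {y | σ.SameCycle x y}) (fun z hz => ?_) .rfl
      have hσz : σ.SameCycle x (σ z) := sameCycle_apply_right.2 hz
      simp only [σ, mul_apply, swap_apply_def] at hσz
      simp only [Set.mem_ofPred_eq]
      split_ifs at hσz with h1 h2
      · exact h1 ▸ hv_mem
      · exact h2 ▸ .rfl
      · exact hσz
    · exact hv_mem

theorem minimalPeriod_swap_mul_self [Finite α] (hv : g v = v) (hxv : x ≠ v) :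
    minimalPeriod (swap v x * g) x = minimalPeriod g x + 1 := by
  have hv_notMem : v ∉ {y | g.SameCycle x y} := fun h => hxv (h.eq_of_right hv)
  have hcycle : {y | (swap v x * g).SameCycle x y} = insert v {y | g.SameCycle x y} := by
    ext y
    simp [sameCycle_swap_mul_iff hv hxv, or_comm]
  rw [minimalPeriod_eq_ncard_sameCycle, minimalPeriod_eq_ncard_sameCycle, hcycle,
    Set.ncard_insert_of_notMem hv_notMem]

theorem minimalPeriod_swap_mul_of_not_sameCycle [Finite α] (hv : g v = v) {y : α}
    (hy : ¬g.SameCycle x y) (hyv : y ≠ v) :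
    minimalPeriod (swap v x * g) y = minimalPeriod g y := by
  have heq : ∀ z, g.SameCycle y z → g z = (swap v x * g) z := fun z hz => by
    have hzv : z ≠ v := by rintro rfl; exact hyv (hz.eq_of_right hv)
    have hgzx : g z ≠ x := fun h => hy (h ▸ sameCycle_apply_right.2 hz).symm
    rw [mul_apply, swap_apply_of_ne_of_ne (hv ▸ g.injective.ne hzv) hgzx]
  simp only [minimalPeriod_eq_ncard_sameCycle]
  congr 1
  ext z
  exact (sameCycle_iff_of_eqOn_sameCycle heq).symm

theorem minimalPeriod_swap_mul_of_sameCycle [Finite α] (hv : g v = v) (hxv : x ≠ v) {y : α}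
    (hy : g.SameCycle x y ∨ y = v) :
    minimalPeriod (swap v x * g) y = minimalPeriod g x + 1 := by
  rw [← ((sameCycle_swap_mul_iff hv hxv).2 hy).minimalPeriod_eq, minimalPeriod_swap_mul_self hv hxv]

end insertion

def AllCyclesOdd (σ : Perm α) : Prop := ∀ x, Odd (minimalPeriod σ x)

def CyclesOddExcept (σ : Perm α) (p : α) : Prop := ∀ x, Odd (minimalPeriod σ x) ↔ ¬σ.SameCycle p x

theorem allCyclesOdd_of_subsingleton [Subsingleton α] (σ : Perm α) : AllCyclesOdd σ := fun x => by
  rw [minimalPeriod_eq_one_of_subsingleton]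
  exact odd_one

section permCongr

variable (e : α ≃ β)

theorem semiconj_permCongr (σ : Perm α) : Semiconj e σ (e.permCongr σ) := fun x => by
  simp [permCongr_apply]

theorem allCyclesOdd_permCongr_iff (σ : Perm α) :
    AllCyclesOdd (e.permCongr σ) ↔ AllCyclesOdd σ := by
  simp only [AllCyclesOdd, e.surjective.forall,
    (semiconj_permCongr e σ).minimalPeriod_eq e.injective]

theorem cyclesOddExcept_permCongr_iff (σ : Perm α) (p : α) :
    CyclesOddExcept (e.permCongr σ) (e p) ↔ CyclesOddExcept σ p := by
  simp only [CyclesOddExcept, e.surjective.forall,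
    (semiconj_permCongr e σ).minimalPeriod_eq e.injective,
    (semiconj_permCongr e σ).sameCycle_iff e.injective]

end permCongr

theorem card_allCyclesOdd_congr (e : α ≃ β) :
    Nat.card {σ : Perm α // AllCyclesOdd σ} = Nat.card {σ : Perm β // AllCyclesOdd σ} :=
  Nat.card_congr (subtypeEquiv e.permCongr fun σ => (allCyclesOdd_permCongr_iff e σ).symm)

theorem card_cyclesOddExcept_congr (e : α ≃ β) (p : α) :
    Nat.card {σ : Perm α // CyclesOddExcept σ p} =
      Nat.card {σ : Perm β // CyclesOddExcept σ (e p)} :=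
  Nat.card_congr (subtypeEquiv e.permCongr fun σ => (cyclesOddExcept_permCongr_iff e σ p).symm)

section option

variable (τ : Perm α)

theorem semiconj_some_optionCongr : Semiconj some τ τ.optionCongr := fun _ => rfl

theorem allCyclesOdd_optionCongr_iff : AllCyclesOdd τ.optionCongr ↔ AllCyclesOdd τ := by
  have hnone : minimalPeriod τ.optionCongr none = 1 := minimalPeriod_eq_one_iff_isFixedPt.2 rfl
  simp only [AllCyclesOdd, Option.forall, hnone, odd_one, true_and,
    (semiconj_some_optionCongr τ).minimalPeriod_eq (Option.some_injective α)]

theorem not_cyclesOddExcept_optionCongr_none : ¬CyclesOddExcept τ.optionCongr none := fun h => by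
  have hnone : minimalPeriod τ.optionCongr none = 1 := minimalPeriod_eq_one_iff_isFixedPt.2 rfl
  simpa [hnone, SameCycle.rfl] using h none

variable [DecidableEq α] [Finite α] {τ} (j : α) {z : α}

theorem minimalPeriod_swap_none_mul_optionCongr_none :
    minimalPeriod (swap none (some j) * τ.optionCongr) none = minimalPeriod τ j + 1 := by
  rw [minimalPeriod_swap_mul_of_sameCycle rfl (Option.some_ne_none j) (Or.inr rfl),
    (semiconj_some_optionCongr τ).minimalPeriod_eq (Option.some_injective α)]

theorem minimalPeriod_swap_none_mul_optionCongr_some_of_sameCycle (h : τ.SameCycle j z) :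
    minimalPeriod (swap none (some j) * τ.optionCongr) (some z) = minimalPeriod τ j + 1 := by
  rw [minimalPeriod_swap_mul_of_sameCycle rfl (Option.some_ne_none j)
      (Or.inl (((semiconj_some_optionCongr τ).sameCycle_iff (Option.some_injective α)).2 h)),
    (semiconj_some_optionCongr τ).minimalPeriod_eq (Option.some_injective α)]

theorem minimalPeriod_swap_none_mul_optionCongr_some_of_not_sameCycle (h : ¬τ.SameCycle j z) :
    minimalPeriod (swap none (some j) * τ.optionCongr) (some z) = minimalPeriod τ z := by
  rw [minimalPeriod_swap_mul_of_not_sameCycle rfl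
      (by rwa [(semiconj_some_optionCongr τ).sameCycle_iff (Option.some_injective α)])
      (Option.some_ne_none z),
    (semiconj_some_optionCongr τ).minimalPeriod_eq (Option.some_injective α)]

theorem sameCycle_swap_none_mul_optionCongr_none_some :
    (swap none (some j) * τ.optionCongr).SameCycle none (some z) ↔ τ.SameCycle j z := by
  rw [← sameCycle_apply_left, mul_apply, optionCongr_apply, Option.map_none, swap_apply_left,
    sameCycle_swap_mul_iff rfl (Option.some_ne_none j),
    (semiconj_some_optionCongr τ).sameCycle_iff (Option.some_injective α)]
  simp

theorem allCyclesOdd_swap_none_mul_optionCongr_iff :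
    AllCyclesOdd (swap none (some j) * τ.optionCongr) ↔ CyclesOddExcept τ j := by
  rw [AllCyclesOdd, Option.forall, minimalPeriod_swap_none_mul_optionCongr_none, Nat.odd_add_one]
  constructor
  · rintro ⟨hj, h⟩ z
    by_cases hz : τ.SameCycle j z
    · rw [← hz.minimalPeriod_eq]
      exact iff_of_false hj (not_not.2 hz)
    · have := h z
      rw [minimalPeriod_swap_none_mul_optionCongr_some_of_not_sameCycle j hz] at this
      exact iff_of_true this hz
  · intro h
    have hj : ¬Odd (minimalPeriod τ j) := fun ho => (h j).1 ho .rfl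
    refine ⟨hj, fun z => ?_⟩
    by_cases hz : τ.SameCycle j z
    · rw [minimalPeriod_swap_none_mul_optionCongr_some_of_sameCycle j hz]
      exact Nat.odd_add_one.2 hj
    · rw [minimalPeriod_swap_none_mul_optionCongr_some_of_not_sameCycle j hz]
      exact (h z).2 hz

theorem cyclesOddExcept_swap_none_mul_optionCongr_none_iff :
    CyclesOddExcept (swap none (some j) * τ.optionCongr) none ↔ AllCyclesOdd τ := by
  simp only [CyclesOddExcept, Option.forall, minimalPeriod_swap_none_mul_optionCongr_none,
    Nat.odd_add_one, SameCycle.rfl, not_true, iff_false, not_not,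
    sameCycle_swap_none_mul_optionCongr_none_some]
  constructor
  · rintro ⟨hj, h⟩ z
    by_cases hz : τ.SameCycle j z
    · exact hz.minimalPeriod_eq ▸ hj
    · have := (h z).2 hz
      rwa [minimalPeriod_swap_none_mul_optionCongr_some_of_not_sameCycle j hz] at this
  · intro h
    refine ⟨h j, fun z => ?_⟩
    by_cases hz : τ.SameCycle j z
    · rw [minimalPeriod_swap_none_mul_optionCongr_some_of_sameCycle j hz]
      simp [Nat.odd_add_one, h j, hz]
    · rw [minimalPeriod_swap_none_mul_optionCongr_some_of_not_sameCycle j hz]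
      simp [h z, hz]

end option

section count

variable [DecidableEq α] [Fintype α]

theorem card_subtype_perm_option (P : Perm (Option α) → Prop) :
    Nat.card {σ // P σ} = Nat.card {τ : Perm α // P τ.optionCongr} +
      ∑ j : α, Nat.card {τ : Perm α // P (swap none (some j) * τ.optionCongr)} := by
  let e : {σ // P σ} ≃ Σ x : Option α, {τ : Perm α // P (swap none x * τ.optionCongr)} :=
    (decomposeOption.subtypeEquiv fun σ =>
      iff_of_eq (congrArg P (decomposeOption.symm_apply_apply σ).symm)).trans
    (subtypeProdEquivSigmaSubtype fun x (τ : Perm α) => P (swap none x * τ.optionCongr))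
  rw [Nat.card_congr e, Nat.card_sigma, Fintype.sum_option, swap_self, ← one_def]
  simp only [one_mul]

theorem card_allCyclesOdd_option :
    Nat.card {σ : Perm (Option α) // AllCyclesOdd σ} =
      Nat.card {τ : Perm α // AllCyclesOdd τ} +
        ∑ j, Nat.card {τ : Perm α // CyclesOddExcept τ j} := by
  simp only [card_subtype_perm_option, allCyclesOdd_optionCongr_iff,
    allCyclesOdd_swap_none_mul_optionCongr_iff]

theorem card_cyclesOddExcept_none :
    Nat.card {σ : Perm (Option α) // CyclesOddExcept σ none} =
      Fintype.card α * Nat.card {τ : Perm α // AllCyclesOdd τ} := by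
  simp [card_subtype_perm_option, not_cyclesOddExcept_optionCongr_none,
    cyclesOddExcept_swap_none_mul_optionCongr_none_iff]

end count

end Equiv.Perm

open Equiv.Perm

noncomputable def numOddCyclePerms (n : ℕ) : ℕ := Nat.card {σ : Perm (Fin n) // AllCyclesOdd σ}

theorem numOddCyclePerms_of_le_one {n : ℕ} (hn : n ≤ 1) : numOddCyclePerms n = 1 := by
  have : Subsingleton (Fin n) := Fin.subsingleton_iff_le_one.2 hn
  rw [numOddCyclePerms, Nat.card_congr (subtypeUnivEquiv allCyclesOdd_of_subsingleton),
    Nat.card_perm, Nat.card_eq_fintype_card, Fintype.card_fin]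
  interval_cases n <;> rfl

theorem numOddCyclePerms_add_two (n : ℕ) :
    numOddCyclePerms (n + 2) = numOddCyclePerms (n + 1) + (n + 1) * (n * numOddCyclePerms n) := by
  have hexcept (j : Fin (n + 1)) :
      Nat.card {τ : Perm (Fin (n + 1)) // CyclesOddExcept τ j} = n * numOddCyclePerms n := by
    rw [card_cyclesOddExcept_congr (finSuccEquiv' j), finSuccEquiv'_at, card_cyclesOddExcept_none,
      Fintype.card_fin, numOddCyclePerms]
  rw [numOddCyclePerms, card_allCyclesOdd_congr (finSuccEquiv (n + 1)), card_allCyclesOdd_option]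
  simp [hexcept, numOddCyclePerms]

theorem numOddCyclePerms_two_mul_add_one (k : ℕ) :
    numOddCyclePerms (2 * k + 1) = (2 * k + 1) * numOddCyclePerms (2 * k) := by
  induction k with
  | zero => simp [numOddCyclePerms_of_le_one]
  | succ k ih =>
    have heven : numOddCyclePerms (2 * k + 2) = (2 * k + 1) ^ 2 * numOddCyclePerms (2 * k) := by
      rw [numOddCyclePerms_add_two, ih]; ring
    rw [show 2 * (k + 1) = 2 * k + 2 by ring, show 2 * k + 2 + 1 = 2 * k + 1 + 2 by ring,
      numOddCyclePerms_add_two, ih, show 2 * k + 1 + 1 = 2 * k + 2 by ring, heven]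
    ring

theorem numOddCyclePerms_two_mul_mul_four_pow (k : ℕ) :
    numOddCyclePerms (2 * k) * 4 ^ k = (2 * k)! * centralBinom k := by
  induction k with
  | zero => simp [numOddCyclePerms_of_le_one]
  | succ k ih =>
    have heven : numOddCyclePerms (2 * k + 2) = (2 * k + 1) ^ 2 * numOddCyclePerms (2 * k) := by
      rw [numOddCyclePerms_add_two, numOddCyclePerms_two_mul_add_one]; ring
    calc numOddCyclePerms (2 * (k + 1)) * 4 ^ (k + 1)
        = 4 * (2 * k + 1) ^ 2 * (numOddCyclePerms (2 * k) * 4 ^ k) := by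
          rw [show 2 * (k + 1) = 2 * k + 2 by ring, heven]; ring
      _ = 2 * (2 * k + 1) * (2 * k)! * (2 * (2 * k + 1) * centralBinom k) := by rw [ih]; ring
      _ = (2 * (k + 1))! * centralBinom (k + 1) := by
          rw [← succ_mul_centralBinom_succ, show 2 * (k + 1) = 2 * k + 1 + 1 by ring,
            factorial_succ, factorial_succ]
          ring

theorem numOddCyclePermsOdd_general (N : ℕ) (hNo : Odd N) :
    (Nat.card {σ : Equiv.Perm (Fin N) //
        ∀ x : Fin N, Odd (Function.minimalPeriod σ x)} : ℚ)
      = (N ! : ℚ) * ((2 : ℚ) ^ (N - 1))⁻¹ * ((N - 1).choose ((N - 1) / 2)) := by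
  obtain ⟨k, rfl⟩ := hNo
  have heven : (numOddCyclePerms (2 * k) : ℚ) * 4 ^ k = (2 * k)! * centralBinom k := by
    exact_mod_cast numOddCyclePerms_two_mul_mul_four_pow k
  change (numOddCyclePerms (2 * k + 1) : ℚ) = _
  rw [numOddCyclePerms_two_mul_add_one, show 2 * k + 1 - 1 = 2 * k by omega,
    show 2 * k / 2 = k by omega, ← centralBinom_eq_two_mul_choose, factorial_succ, pow_mul]
  push_cast
  rw [show (2 : ℚ) ^ 2 = 4 by norm_num]
  field_simp
  linear_combination heven

/-- For odd `N`, the number of permutations of `[N]` all of whose cycle lengths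
are odd equals `N! · 2^{-N+1} · C(N-1, (N-1)/2)`. -/
theorem numOddCyclePermsOdd (N : ℕ) (hN : 0 < N) (hNo : Odd N) :
    (Nat.card {σ : Equiv.Perm (Fin N) //
        ∀ x : Fin N, Odd (Function.minimalPeriod σ x)} : ℚ)
      = (N ! : ℚ) * ((2 : ℚ) ^ (N - 1))⁻¹ * ((N - 1).choose ((N - 1) / 2)) :=
  numOddCyclePermsOdd_general N hNo
end

section
/- For every positive integer N, (-1)^{N-1} · ∑_{j=0}^{N-2} ((-1)^j / j!) · ∑_{k=j}^{N-1} (-1)^k · k! equals N! · ∑_{μ=0}^{N-1} (-1)^μ / ((N-μ) · μ!) + (-1)^N. -/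
open Nat Finset

/-!
Write `D k = k! ∑_{j ≤ k} (-1)^j / j!` for the derangement numbers. Summing the left-hand side
over `j` first (by induction on `N`) turns it into `(-1)^(N-1) (∑_{k < N} (-1)^k D k - 1)`.
Inclusion–exclusion gives `(-1)^k D k = ∑_{i ≤ k} (-1)^i C(k, i) i!`, so by the hockey-stick
identity `∑_{k < N} (-1)^k D k = ∑_{i < N} (-1)^i C(N, i + 1) i!`; and this is
`(-1)^(N-1) N! ∑_{μ < N} (-1)^μ / ((N - μ) μ!)`, term by term under `μ = N - 1 - i`.
-/

theorem neg_one_pow_mul_self {R : Type*} [Monoid R] [HasDistribNeg R] (n : ℕ) :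
    (-1 : R) ^ n * (-1) ^ n = 1 := by
  rw [← pow_add, ← two_mul, (even_two_mul n).neg_one_pow]

theorem numDerangements_eq_factorial_mul_sum {K : Type*} [Field K] [CharZero K] (n : ℕ) :
    (numDerangements n : K) = n ! * ∑ j ∈ range (n + 1), (-1 : K) ^ j / j ! := by
  rw [← Int.cast_natCast, numDerangements_sum, mul_sum]
  push_cast
  refine sum_congr rfl fun k hk => ?_
  have h : (k ! : K) * (k + 1).ascFactorial (n - k) = n ! := by
    exact_mod_cast (factorial_mul_ascFactorial k (n - k)).trans
      (by rw [Nat.add_sub_cancel' (mem_range_succ_iff.mp hk)])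
  have hk0 : (k ! : K) ≠ 0 := Nat.cast_ne_zero.mpr (factorial_ne_zero k)
  rw [← h]
  field_simp

theorem neg_one_pow_mul_numDerangements {R : Type*} [CommRing R] (n : ℕ) :
    (-1 : R) ^ n * numDerangements n =
      ∑ i ∈ range (n + 1), (-1 : R) ^ i * (n.choose i * i ! : ℕ) := by
  rw [← Int.cast_natCast, numDerangements_sum]
  push_cast
  rw [← sum_range_reflect, mul_sum]
  refine sum_congr rfl fun i hi => ?_
  have hin : i ≤ n := mem_range_succ_iff.mp hi
  have hsign : (-1 : R) ^ n = (-1) ^ (n - i) * (-1) ^ i := by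
    rw [← pow_add, Nat.sub_add_cancel hin]
  have hasc : (n - i + 1).ascFactorial i = n.choose i * i ! := by
    rw [← add_descFactorial_eq_ascFactorial, Nat.sub_add_cancel hin,
      descFactorial_eq_factorial_mul_choose, mul_comm]
  rw [Nat.add_sub_cancel, Nat.sub_sub_self hin, hsign, hasc, mul_mul_mul_comm,
    neg_one_pow_mul_self, one_mul, Nat.cast_mul]

theorem sum_neg_one_pow_mul_numDerangements {R : Type*} [CommRing R] (n : ℕ) :
    ∑ k ∈ range (n + 1), (-1 : R) ^ k * numDerangements k =
      ∑ i ∈ range (n + 1), (-1 : R) ^ i * ((n + 1).choose (i + 1) * i ! : ℕ) := by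
  simp_rw [neg_one_pow_mul_numDerangements, range_eq_Ico]
  rw [← sum_Ico_Ico_comm]
  refine sum_congr rfl fun i _ => ?_
  rw [← mul_sum, ← Nat.cast_sum, ← sum_mul, Ico_add_one_right_eq_Icc, Nat.sum_Icc_choose]

theorem sum_range_mul_sum_Icc_neg_one_pow_factorial {K : Type*} [Field K] [CharZero K] (n : ℕ) :
    ∑ j ∈ range n, (-1 : K) ^ j / j ! * ∑ k ∈ Icc j n, (-1 : K) ^ k * k ! =
      ∑ k ∈ range (n + 1), (-1 : K) ^ k * numDerangements k - 1 := by
  induction n with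
  | zero => simp
  | succ n ih =>
    have hsplit : ∀ j ∈ range (n + 1), ∑ k ∈ Icc j (n + 1), (-1 : K) ^ k * k ! =
        ∑ k ∈ Icc j n, (-1 : K) ^ k * k ! + (-1) ^ (n + 1) * (n + 1)! := fun j hj =>
      sum_Icc_succ_top (by simp at hj; omega) _
    have hdiag : (-1 : K) ^ n / n ! * ∑ k ∈ Icc n n, (-1 : K) ^ k * k ! = 1 := by
      have hn0 : (n ! : K) ≠ 0 := Nat.cast_ne_zero.mpr (factorial_ne_zero n)
      rw [Icc_self, sum_singleton, div_mul_eq_mul_div, div_eq_one_iff_eq hn0]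
      linear_combination (n ! : K) * neg_one_pow_mul_self (R := K) n
    have htail : (∑ j ∈ range (n + 1), (-1 : K) ^ j / j !) * ((-1) ^ (n + 1) * (n + 1)!) =
        (-1) ^ (n + 1) * numDerangements (n + 1) - 1 := by
      have hn1 : ((n + 1)! : K) ≠ 0 := Nat.cast_ne_zero.mpr (factorial_ne_zero _)
      rw [numDerangements_eq_factorial_mul_sum, sum_range_succ _ (n + 1)]
      field_simp
      linear_combination (-1 : K) * neg_one_pow_mul_self (R := K) (n + 1)
    rw [sum_congr rfl fun j hj => congrArg _ (hsplit j hj)]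
    simp only [mul_add, sum_add_distrib]
    rw [sum_range_succ, ih, hdiag, ← sum_mul, htail, sum_range_succ _ (n + 1)]
    ring

theorem factorial_div_mul_factorial_eq_choose_mul_factorial {K : Type*} [Field K] [CharZero K]
    {n i : ℕ} (h : i ≤ n) :
    ((n + 1)! : K) / ((i + 1) * (n - i)!) = (n + 1).choose (i + 1) * i ! := by
  have hf := choose_mul_factorial_mul_factorial (Nat.succ_le_succ h)
  rw [Nat.succ_sub_succ, factorial_succ i] at hf
  have h0 : ((n - i)! : K) ≠ 0 := Nat.cast_ne_zero.mpr (factorial_ne_zero _)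
  rw [div_eq_iff (mul_ne_zero (Nat.cast_add_one_ne_zero i) h0), ← hf]
  push_cast
  ring

theorem factorial_mul_sum_neg_one_pow_div {K : Type*} [Field K] [CharZero K] (n : ℕ) :
    ((n + 1)! : K) * ∑ μ ∈ range (n + 1), (-1 : K) ^ μ / ((n + 1 - μ) * μ !) =
      (-1) ^ n * ∑ i ∈ range (n + 1), (-1 : K) ^ i * ((n + 1).choose (i + 1) * i ! : ℕ) := by
  rw [← sum_range_reflect, mul_sum, mul_sum]
  refine sum_congr rfl fun i hi => ?_
  have hin : i ≤ n := mem_range_succ_iff.mp hi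
  have hden : (n + 1 - (n - i : ℕ) : K) = i + 1 := by rw [Nat.cast_sub hin]; ring
  have hsign : (-1 : K) ^ n = (-1) ^ (n - i) * (-1) ^ i := by
    rw [← pow_add, Nat.sub_add_cancel hin]
  rw [Nat.add_sub_cancel, hden, mul_div_left_comm,
    factorial_div_mul_factorial_eq_choose_mul_factorial hin, hsign]
  push_cast
  linear_combination
    -(-1 : K) ^ (n - i) * (n + 1).choose (i + 1) * i ! * neg_one_pow_mul_self (R := K) i

/-- `(-1)^{N-1}·∑_{j=0}^{N-2} ((-1)^j/j!)·∑_{k=j}^{N-1} (-1)^k k!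
    = N!·∑_{μ=0}^{N-1} (-1)^μ/((N-μ)·μ!) + (-1)^N`. -/
theorem alternating_sum_identity (N : ℕ) (hN : 0 < N) :
    (-1 : ℚ) ^ (N - 1) *
        ∑ j ∈ Finset.range (N - 1),
          ((-1 : ℚ) ^ j / (j ! : ℚ)) * ∑ k ∈ Finset.Icc j (N - 1), (-1 : ℚ) ^ k * (k ! : ℚ)
      = (N ! : ℚ) * (∑ μ ∈ Finset.range N, (-1 : ℚ) ^ μ / (((N : ℚ) - μ) * (μ ! : ℚ)))
          + (-1 : ℚ) ^ N := by
  obtain ⟨n, rfl⟩ := Nat.exists_eq_add_one_of_ne_zero hN.ne'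
  rw [Nat.add_sub_cancel, sum_range_mul_sum_Icc_neg_one_pow_factorial,
    sum_neg_one_pow_mul_numDerangements, Nat.cast_add_one, factorial_mul_sum_neg_one_pow_div]
  ring
end

section
/- The number of N-cycles p on [N] such that no i ∈ [N] satisfies p(i) ≡ i - 1 (mod N) equals N! · ∑_{μ=0}^{N-1} (-1)^μ / ((N-μ) · μ!) + (-1)^N. -/
/-!
Inclusion–exclusion over the set `S` of positions `i` at which `p i = c i` is imposed, where
`c = (· - 1)` is itself a cycle through all of `[N]`. For `s ∈ S`, removing `s` from both `p` and
`c` (the point sent to `s` is sent to `c s` instead) matches the full cycles agreeing with `c` on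
`S` with the full cycles on `[N] ∖ {s}` agreeing with the reduced `c` on `S ∖ {s}`; so there are
`(N - |S| - 1)!` of them. The sets with `|S| = k < N` contribute
`(-1)^k C(N,k) (N-k-1)! = N! (-1)^k / ((N-k) k!)`, and `S = [N]` contributes `(-1)^N` for `c` alone.
-/

open Nat Equiv Finset

theorem Finset.card_and_forall_not_eq_sum {X ι : Type*} [Finite X] [Fintype ι] (P : X → Prop)
    (R : ι → X → Prop) :
    (Nat.card {x // P x ∧ ∀ i, ¬R i x} : ℤ) =
      ∑ t ∈ (univ : Finset ι).powerset, (-1 : ℤ) ^ #t * Nat.card {x // P x ∧ ∀ i ∈ t, R i x} := by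
  classical
  have := Fintype.ofFinite X
  have hcard (Q : X → Prop) (T : Finset {x // P x}) (hT : ∀ y, y ∈ T ↔ Q y) :
      Nat.card {x // P x ∧ Q x} = #T :=
    (Nat.card_congr ((subtypeSubtypeEquivSubtypeInter P Q).symm.trans
      (subtypeEquivRight hT).symm)).trans (Nat.card_eq_finsetCard T)
  rw [hcard _ (univ.inf fun i => ({y | R i y} : Finset {x // P x})ᶜ) (by simp [mem_inf]),
    inclusion_exclusion_card_inf_compl]
  refine sum_congr rfl fun t _ => ?_
  rw [hcard _ (t.inf fun i => ({y | R i y} : Finset {x // P x})) (by simp [mem_inf])]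

theorem Nat.choose_mul_factorial_sub_one {n k : ℕ} (hk : k < n) :
    (n.choose k * (n - k - 1)! : ℚ) = n ! / ((n - k) * k !) := by
  have hfac : n ! = n.choose k * k ! * ((n - k) * (n - k - 1)!) := by
    rw [Nat.mul_factorial_pred (by omega), Nat.choose_mul_factorial_mul_factorial hk.le]
  have hnk : (n : ℚ) - k ≠ 0 := sub_ne_zero.2 (by exact_mod_cast hk.ne')
  rw [hfac, eq_div_iff (mul_ne_zero hnk (by positivity))]
  push_cast [Nat.cast_sub hk.le]
  ring

theorem Equiv.subRight_pow_apply {G : Type*} [AddGroup G] (a x : G) (k : ℕ) :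
    (Equiv.subRight a ^ k) x = x - k • a := by
  induction k generalizing x with
  | zero => simp
  | succ k ih => rw [pow_succ, Perm.mul_apply, ih, Equiv.subRight_apply, succ_nsmul,
      sub_add_eq_sub_sub_swap]

namespace Equiv.Perm

variable {α : Type*}

theorem isCycleOn_univ_iff {p : Perm α} :
    p.IsCycleOn _root_.Set.univ ↔ ∀ x y, p.SameCycle x y := by
  simp [IsCycleOn, p.bijective]

theorem SameCycle.of_mapsTo [Finite α] {p : Perm α} {x y : α} (h : p.SameCycle x y) {T : Set α}
    (hT : Set.MapsTo p T T) (hx : x ∈ T) : y ∈ T := by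
  obtain ⟨k, -, rfl⟩ := h.exists_pow_eq'
  rw [← iterate_eq_pow]
  exact hT.iterate k hx

section Bypass

variable [DecidableEq α]

/-- `swap s (p s) * p` fixes `s`, sends `p⁻¹ s` to `p s` and agrees with `p` elsewhere. -/
theorem sameCycle_swap_mul_iff_s14 [Finite α] {p : Perm α} {s x y : α} (hx : x ≠ s) (hy : y ≠ s) :
    (swap s (p s) * p).SameCycle x y ↔ p.SameCycle x y := by
  set q := swap s (p s) * p
  have hqs : q s = s := by simp [q]
  have hq {z} (hz : z ≠ s) : q z = if p z = s then p s else p z := by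
    split_ifs with hpz
    · simp [q, hpz]
    · exact swap_apply_of_ne_of_ne hpz (p.injective.ne hz)
  constructor
  · intro h
    refine h.of_mapsTo (T := {z | p.SameCycle x z}) (fun z (hz : p.SameCycle x z) => ?_) .rfl
    by_cases hzs : z = s
    · rwa [hzs, hqs, ← hzs]
    · rw [Set.mem_ofPred, hq hzs]
      split_ifs with hpz
      · exact sameCycle_apply_right.2 (hpz ▸ sameCycle_apply_right.2 hz)
      · exact sameCycle_apply_right.2 hz
  · intro h
    have hT : Set.MapsTo p {z | q.SameCycle x z ∨ z = s ∧ q.SameCycle x (p s)}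
        {z | q.SameCycle x z ∨ z = s ∧ q.SameCycle x (p s)} := by
      rintro z (hz | ⟨rfl, hps⟩)
      · have hzs : z ≠ s := fun hzs => hx ((hzs ▸ hz).eq_of_right hqs)
        have hqz := sameCycle_apply_right.2 hz
        rw [hq hzs] at hqz
        split_ifs at hqz with hpz
        exacts [Or.inr ⟨hpz, hqz⟩, Or.inl hqz]
      · exact Or.inl hps
    exact (h.of_mapsTo hT (Or.inl .rfl)).resolve_right fun h => hy h.1

/-- Removes `s` from the cycle of `p` through it: the point sent to `s` is sent to `b = p s`
instead. -/
def bypassEquiv (s b : α) : {p : Perm α // p s = b} ≃ Perm {x // x ≠ s} :=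
  ((Equiv.mulLeft (swap s b)).subtypeEquiv (q := fun f => f s = s) fun p => by
      simp [swap_apply_eq_iff]).trans <|
    (Equiv.subtypeEquivRight fun f => by simp).trans (Perm.subtypeEquivSubtypePerm (· ≠ s)).symm

theorem bypassEquiv_apply_coe {s b : α} (p : {p : Perm α // p s = b}) (i : {x // x ≠ s}) :
    (bypassEquiv s b p i : α) = swap s b (p.1 i) := rfl

theorem isCycleOn_univ_bypassEquiv_iff [Finite α] {s b : α} (hb : b ≠ s)
    (p : {p : Perm α // p s = b}) :
    (bypassEquiv s b p).IsCycleOn _root_.Set.univ ↔ p.1.IsCycleOn _root_.Set.univ := by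
  obtain ⟨p, rfl⟩ := p
  have hsub (x y : {x // x ≠ s}) :
      (bypassEquiv s (p s) ⟨p, rfl⟩).SameCycle x y ↔ p.SameCycle x y := by
    rw [← sameCycle_swap_mul_iff_s14 x.2 y.2]
    exact sameCycle_subtypePerm (h := fun z => by simp [swap_apply_eq_iff])
  have hmove (z : α) : ∃ z' : {x // x ≠ s}, p.SameCycle z z' := by
    by_cases hz : z = s
    · exact ⟨⟨p s, hb⟩, hz ▸ sameCycle_apply_right.2 .rfl⟩
    · exact ⟨⟨z, hz⟩, .rfl⟩
  simp only [isCycleOn_univ_iff, hsub]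
  refine ⟨fun h x y => ?_, fun h x y => h x y⟩
  obtain ⟨x', hx⟩ := hmove x
  obtain ⟨y', hy⟩ := hmove y
  exact hx.trans ((h x' y').trans hy.symm)

end Bypass

section Count

variable [Fintype α]

theorem isCycle_and_card_support_iff [DecidableEq α] [Nontrivial α] {p : Perm α} :
    p.IsCycle ∧ #p.support = Fintype.card α ↔ p.IsCycleOn _root_.Set.univ := by
  have hsupp : #p.support = Fintype.card α ↔ {x | p x ≠ x} = _root_.Set.univ := by
    simp [card_eq_iff_eq_univ, Finset.eq_univ_iff_forall, Set.eq_univ_iff_forall]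
  rw [hsupp]
  refine ⟨fun ⟨hp, hmove⟩ => hmove ▸ hp.isCycleOn, fun hp => ⟨?_, ?_⟩⟩
  · exact isCycle_iff_exists_isCycleOn.2 ⟨_, Set.nontrivial_univ, hp, fun x _ => trivial⟩
  · exact Set.eq_univ_of_forall fun x => hp.apply_ne Set.nontrivial_univ (Set.mem_univ x)

theorem cycleType_eq_singleton_card_iff [DecidableEq α] [Nontrivial α] {p : Perm α} :
    p.cycleType = {Fintype.card α} ↔ p.IsCycleOn _root_.Set.univ := by
  rw [← isCycle_and_card_support_iff]
  refine ⟨fun h => ?_, fun ⟨hp, hsupp⟩ => hsupp ▸ hp.cycleType⟩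
  have hp : p.IsCycle := card_cycleType_eq_one.1 (by simp [h])
  exact ⟨hp, Multiset.singleton_inj.1 (hp.cycleType.symm.trans h)⟩

theorem card_isCycleOn_univ :
    Nat.card {p : Perm α // p.IsCycleOn _root_.Set.univ} = (Fintype.card α - 1)! := by
  classical
  rcases subsingleton_or_nontrivial α with hα | hα
  · rw [Fintype.card_le_one_iff_subsingleton.2 hα |> Nat.sub_eq_zero_of_le, factorial_zero]
    exact Nat.card_eq_one_iff_unique.2 ⟨inferInstance, ⟨⟨1, isCycleOn_of_subsingleton _ _⟩⟩⟩
  · rw [Nat.card_eq_fintype_card, Fintype.card_subtype]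
    simp_rw [← cycleType_eq_singleton_card_iff]
    rw [card_of_cycleType_singleton (Fintype.one_lt_card) le_rfl, choose_self, mul_one]

theorem card_agree_eq_card_agree_bypassEquiv [DecidableEq α] {c : Perm α} {S : Finset α}
    {s : α} (hs : s ∈ S) (hcs : c s ≠ s) :
    Nat.card {p : Perm α // p.IsCycleOn _root_.Set.univ ∧ ∀ i ∈ S, p i = c i} =
      Nat.card {q : Perm {x // x ≠ s} // q.IsCycleOn _root_.Set.univ ∧
        ∀ i ∈ S.subtype (· ≠ s), q i = bypassEquiv s (c s) ⟨c, rfl⟩ i} := by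
  let P (p : Perm α) : Prop :=
    p.IsCycleOn _root_.Set.univ ∧ ∀ i ∈ S.subtype (· ≠ s), p i = c i
  calc _ = Nat.card {p : {p : Perm α // p s = c s} // P p.1} :=
        Nat.card_congr <| (Equiv.subtypeEquivRight fun p => ?_).trans
          (subtypeSubtypeEquivSubtypeInter _ P).symm
    _ = _ := Nat.card_congr <| (bypassEquiv s (c s)).subtypeEquiv fun p =>
        and_congr (isCycleOn_univ_bypassEquiv_iff hcs p).symm (forall₂_congr fun i _ => ?_)
  · simp only [P, Finset.mem_subtype, Subtype.forall]
    refine ⟨fun ⟨hp, h⟩ => ⟨h s hs, hp, fun i _ hi => h i hi⟩, fun ⟨hps, hp, h⟩ => ⟨hp, ?_⟩⟩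
    intro i hi
    by_cases his : i = s
    exacts [his ▸ hps, h i his hi]
  · rw [Subtype.ext_iff, bypassEquiv_apply_coe, bypassEquiv_apply_coe,
      (swap s (c s)).injective.eq_iff]

/-- For `S = univ` the truncated subtraction gives `0! = 1`, counting `c` itself. -/
theorem card_isCycleOn_univ_agree {c : Perm α} (hc : c.IsCycleOn _root_.Set.univ)
    (S : Finset α) :
    Nat.card {p : Perm α // p.IsCycleOn _root_.Set.univ ∧ ∀ i ∈ S, p i = c i} =
      (Fintype.card α - #S - 1)! := by
  classical
  induction hn : #S generalizing α with
  | zero =>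
    rw [card_eq_zero.1 hn, Nat.sub_zero, ← card_isCycleOn_univ]
    exact Nat.card_congr (Equiv.subtypeEquivRight fun p => by simp)
  | succ n ih =>
    obtain ⟨s, hs⟩ := card_pos.1 (by omega : 0 < #S)
    by_cases hcs : c s = s
    · have : Subsingleton α := not_nontrivial_iff_subsingleton.1 fun _ =>
        hc.apply_ne Set.nontrivial_univ (Set.mem_univ s) hcs
      have := Fintype.card_le_one_iff_subsingleton.2 this
      rw [Nat.sub_eq_zero_of_le (by omega), factorial_zero]
      exact Nat.card_eq_one_iff_unique.2 ⟨inferInstance, ⟨⟨c, hc, fun _ _ => rfl⟩⟩⟩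
    · have hcard : #(S.subtype (· ≠ s)) = n := by
        rw [card_subtype, filter_ne', card_erase_of_mem hs, hn, Nat.add_sub_cancel]
      rw [card_agree_eq_card_agree_bypassEquiv hs hcs,
        ih ((isCycleOn_univ_bypassEquiv_iff hcs _).2 hc) _ hcard]
      simp only [Fintype.card_subtype_compl, Fintype.card_unique]
      congr 1
      omega

theorem card_isCycleOn_univ_forall_ne {c : Perm α} (hc : c.IsCycleOn _root_.Set.univ) :
    (Nat.card {p : Perm α // p.IsCycleOn _root_.Set.univ ∧ ∀ i, p i ≠ c i} : ℤ) =
      ∑ k ∈ range (Fintype.card α + 1),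
        (-1 : ℤ) ^ k * (Fintype.card α).choose k * (Fintype.card α - k - 1)! := by
  rw [card_and_forall_not_eq_sum]
  simp_rw [card_isCycleOn_univ_agree hc]
  rw [sum_powerset_apply_card (fun k => (-1 : ℤ) ^ k * (Fintype.card α - k - 1)!),
    Finset.card_univ]
  simp only [nsmul_eq_mul, mul_assoc, mul_left_comm]

end Count

end Equiv.Perm

open Fin.NatCast in
theorem Fin.isCycleOn_univ_subRight_one (N : ℕ) [NeZero N] :
    Perm.IsCycleOn (Equiv.subRight (1 : Fin N)) Set.univ := by
  refine Perm.isCycleOn_univ_iff.2 fun x y => ⟨((x - y : Fin N).val : ℤ), ?_⟩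
  rw [zpow_natCast, subRight_pow_apply, nsmul_one, Fin.cast_val_eq_self, sub_sub_cancel]

/-- The number of `N`-cycles `p` on `[N]` with no `i` satisfying
`p(i) ≡ i - 1 (mod N)` equals `N!·∑_{μ=0}^{N-1} (-1)^μ/((N-μ)·μ!) + (-1)^N`. -/
theorem card_cycles_no_shift (N : ℕ) [NeZero N] :
    (Nat.card {p : Equiv.Perm (Fin N) //
        p.IsCycle ∧ p.support.card = N ∧ ∀ x : Fin N, p x ≠ x - 1} : ℚ)
      = (N ! : ℚ) * (∑ μ ∈ Finset.range N, (-1 : ℚ) ^ μ / (((N : ℚ) - μ) * (μ ! : ℚ)))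
          + (-1 : ℚ) ^ N := by
  have hcount : Nat.card {p : Perm (Fin N) // p.IsCycle ∧ #p.support = N ∧ ∀ x, p x ≠ x - 1} =
      Nat.card {p : Perm (Fin N) // p.IsCycleOn Set.univ ∧ ∀ x, p x ≠ Equiv.subRight 1 x} := by
    refine Nat.card_congr (subtypeEquivRight fun p => ?_)
    by_cases hp : ∀ x : Fin N, p x ≠ x - 1
    · have := nontrivial_of_ne _ _ (hp 0)
      simpa [hp, Fintype.card_fin] using Perm.isCycle_and_card_support_iff (p := p)
    · simp [hp]
  rw [hcount, ← Int.cast_natCast,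
    Perm.card_isCycleOn_univ_forall_ne (Fin.isCycleOn_univ_subRight_one N)]
  push_cast
  rw [Fintype.card_fin, sum_range_succ, mul_sum, choose_self, Nat.sub_self, zero_tsub,
    factorial_zero, cast_one, mul_one, mul_one]
  refine congrArg (· + _) (sum_congr rfl fun k hk => ?_)
  rw [mul_assoc, choose_mul_factorial_sub_one (mem_range.1 hk)]
  ring
end
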